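/- Assume parallel trends (PT), no anticipation (NA), and T ≥ 2. Define the static interaction-weighted estimator κ̂(n) := Σ_{e=1}^{T−1} (N_{{e}}(n) / Σ_{e'=1}^{T−1} N_{{e'}}(n)) · (1/(T−e)) · Σ_{l=0}^{T−1−e} δ̂^{0,{T}}_{e,l}(n). Then κ̂(n) converges almost surely, as n → ∞, to Σ_{e=1}^{T−1} P(E = e | E ≤ T−1) · (1/(T−e)) · Σ_{l=0}^{T−1−e} CATT(e,l), a convex weighted average of the cohort-specific average treatment effects on the treated. (Proposition 5: probability limit of the IW estimator for overall treatment effects.) -/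

import Mathlib

/-!
By the strong law of large numbers, applied to functions of the i.i.d. observations
`(E_i, (Y_{i,t})_t)`, the cohort frequencies `N_{e}(n)/n` and the normalized cohort sums
`n⁻¹ Σ_{E_i = e} (Y_{i,t} − Y_{i,0})` converge almost surely to `P(E = e)` and
`E[(Y_t − Y_0)·1{E = e}]`. Taking quotients, the cohort shares converge to `P(E = e | E ≤ T − 1)`
(as `E ≥ 1` a.s.) and `δ̂^{0,{T}}_{e,l}` converges to the population contrast
`E[Y_{e+l} − Y_0 | E = e] − E[Y_{e+l} − Y_0 | E = T]`. No anticipation turns the first term into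
`CATT(e,l) + E[Y∞_{e+l} − Y∞_0 | E = e]` and the second into `E[Y∞_{e+l} − Y∞_0 | E = T]`, since
`e + l < T`; by parallel trends both baseline trends equal `E[Y∞_{e+l} − Y∞_0]`.
-/

open MeasureTheory Filter

noncomputable section

/-- Conditional expectation `E[Z | A] := E[Z·1_A] / P(A)` given an event `A`. -/
def cexp {Ω : Type*} [MeasurableSpace Ω] (μ : Measure Ω) (Z : Ω → ℝ) (A : Set Ω) : ℝ :=
  (∫ ω in A, Z ω ∂μ) / (μ A).toReal

/-- Observed outcome `Y_t := Y∞_t + Σ_{e=1}^{T} (Yᵉ_t − Y∞_t)·1{E = e}`. -/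
def obsY {Ω : Type*} (T : ℕ) (E : Ω → ℕ) (Ye : ℕ → ℕ → Ω → ℝ) (Yinf : ℕ → Ω → ℝ)
    (t : ℕ) (ω : Ω) : ℝ :=
  Yinf t ω + ∑ e ∈ Finset.Icc 1 T, (Ye e t ω - Yinf t ω) * (if E ω = e then 1 else 0)

/-- Cohort-specific average treatment effect on the treated,
`CATT(e,l) := E[Yᵉ_{e+l} − Y∞_{e+l} | E = e]`. -/
def CATT {Ω : Type*} [MeasurableSpace Ω] (μ : Measure Ω) (E : Ω → ℕ)
    (Ye : ℕ → ℕ → Ω → ℝ) (Yinf : ℕ → Ω → ℝ) (e : ℕ) (l : ℤ) : ℝ :=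
  cexp μ (fun ω => Ye e ((e : ℤ) + l).toNat ω - Yinf ((e : ℤ) + l).toNat ω) {ω | E ω = e}

/-- Parallel trends in baseline outcome. -/
def PT {Ω : Type*} [MeasurableSpace Ω] (μ : Measure Ω) (T : ℕ) (E : Ω → ℕ)
    (Yinf : ℕ → Ω → ℝ) : Prop :=
  ∀ e ∈ Finset.Icc 1 T, ∀ s ≤ T, ∀ t ≤ T,
    cexp μ (fun ω => Yinf t ω - Yinf s ω) {ω | E ω = e}
      = ∫ ω, (Yinf t ω - Yinf s ω) ∂μ

/-- No anticipatory behavior. -/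
def NA {Ω : Type*} [MeasurableSpace Ω] (μ : Measure Ω) (T : ℕ)
    (Ye : ℕ → ℕ → Ω → ℝ) (Yinf : ℕ → Ω → ℝ) : Prop :=
  ∀ e ∈ Finset.Icc 1 T, ∀ t < e, Ye e t =ᵐ[μ] Yinf t

/-- Number of indices `i < n` whose event time lies in `A`. -/
def sampleCount {Ω' : Type*} (Eseq : ℕ → Ω' → ℕ) (A : Finset ℕ) (n : ℕ) (ω' : Ω') : ℕ :=
  ((Finset.range n).filter (fun i => Eseq i ω' ∈ A)).card

/-- The sample difference-in-differences estimator `δ̂^{s,C}_{e,l}(n)`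
(Lean's convention `x/0 = 0` handles vanishing denominators). -/
def sampleDID {Ω' : Type*} (Eseq : ℕ → Ω' → ℕ) (Yseq : ℕ → ℕ → Ω' → ℝ)
    (e : ℕ) (l : ℤ) (s : ℕ) (C : Finset ℕ) (n : ℕ) (ω' : Ω') : ℝ :=
  (∑ i ∈ (Finset.range n).filter (fun i => Eseq i ω' = e),
      (Yseq i ((e : ℤ) + l).toNat ω' - Yseq i s ω'))
      / (sampleCount Eseq {e} n ω' : ℝ)
    - (∑ i ∈ (Finset.range n).filter (fun i => Eseq i ω' ∈ C),
        (Yseq i ((e : ℤ) + l).toNat ω' - Yseq i s ω'))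
      / (sampleCount Eseq C n ω' : ℝ)

/-- The sequence `((E_i, (Y_{i,t})_t))_i` is i.i.d. with each term distributed as
`(E, (Y_t)_t)`. -/
def IIDSample {Ω Ω' : Type*} [MeasurableSpace Ω] [MeasurableSpace Ω']
    (μ : Measure Ω) (μ' : Measure Ω') (T : ℕ) (E : Ω → ℕ)
    (Ye : ℕ → ℕ → Ω → ℝ) (Yinf : ℕ → Ω → ℝ)
    (Eseq : ℕ → Ω' → ℕ) (Yseq : ℕ → ℕ → Ω' → ℝ) : Prop :=
  ProbabilityTheory.iIndepFun
      (fun i ω' => ((Eseq i ω', fun t : Fin (T + 1) => Yseq i t ω') :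
        ℕ × (Fin (T + 1) → ℝ))) μ'
    ∧ ∀ i : ℕ,
        Measure.map (fun ω' => ((Eseq i ω', fun t : Fin (T + 1) => Yseq i t ω') :
          ℕ × (Fin (T + 1) → ℝ))) μ'
        = Measure.map (fun ω => ((E ω, fun t : Fin (T + 1) => obsY T E Ye Yinf t ω) :
          ℕ × (Fin (T + 1) → ℝ))) μ

open ProbabilityTheory Topology Finset

theorem Filter.Tendsto.div_of_div_natCast {a b : ℕ → ℝ} {α β : ℝ}
    (ha : Tendsto (fun n => a n / n) atTop (𝓝 α)) (hb : Tendsto (fun n => b n / n) atTop (𝓝 β))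
    (hβ : β ≠ 0) : Tendsto (fun n => a n / b n) atTop (𝓝 (α / β)) := by
  refine (ha.div hb hβ).congr' ?_
  filter_upwards [eventually_ne_atTop 0] with n hn
  exact div_div_div_cancel_right₀ (Nat.cast_ne_zero.mpr hn) _ _

section StrongLaw

variable {Ω Ω' β : Type*} [MeasurableSpace Ω] [MeasurableSpace Ω'] [MeasurableSpace β]
  {μ : Measure Ω} [IsProbabilityMeasure μ] {μ' : Measure Ω'} {V : Ω → β} {Vs : ℕ → Ω' → β}

theorem ae_tendsto_sum_comp_div_of_iid (hV : AEMeasurable V μ) (hindep : iIndepFun Vs μ')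
    (hlaw : ∀ i, μ'.map (Vs i) = μ.map V) {g : β → ℝ} (hg : Measurable g)
    (hint : Integrable (g ∘ V) μ) :
    ∀ᵐ ω' ∂μ', Tendsto (fun n : ℕ => (∑ i ∈ range n, g (Vs i ω')) / n) atTop
      (𝓝 (∫ ω, g (V ω) ∂μ)) := by
  have hident : ∀ i, IdentDistrib (g ∘ Vs i) (g ∘ V) μ' μ := fun i =>
    have : IsProbabilityMeasure (μ.map V) := Measure.isProbabilityMeasure_map hV
    (IdentDistrib.mk (.of_map_ne_zero (hlaw i ▸ IsProbabilityMeasure.ne_zero _)) hV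
      (hlaw i)).comp hg
  have hslln := strong_law_ae_real (fun i => g ∘ Vs i) ((hident 0).integrable_iff.mpr hint)
    (fun i j hij => (hindep.indepFun hij).comp hg hg) fun i => (hident i).trans (hident 0).symm
  rwa [(hident 0).integral_eq] at hslln

variable {p : β → Prop} [DecidablePred p]

theorem ae_tendsto_sum_filter_div_of_iid (hV : AEMeasurable V μ) (hindep : iIndepFun Vs μ')
    (hlaw : ∀ i, μ'.map (Vs i) = μ.map V) (hp : MeasurableSet {b | p b}) {g : β → ℝ}
    (hg : Measurable g) (hint : IntegrableOn (g ∘ V) (V ⁻¹' {b | p b}) μ) :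
    ∀ᵐ ω' ∂μ', Tendsto
      (fun n : ℕ => (∑ i ∈ (range n).filter (fun i => p (Vs i ω')), g (Vs i ω')) / n) atTop
      (𝓝 (∫ ω in V ⁻¹' {b | p b}, g (V ω) ∂μ)) := by
  have hpV : NullMeasurableSet (V ⁻¹' {b | p b}) μ := hV.nullMeasurableSet_preimage hp
  have hcomp : {b | p b}.indicator g ∘ V = (V ⁻¹' {b | p b}).indicator (g ∘ V) :=
    funext fun _ => (Set.indicator_comp_right _).symm
  have h := ae_tendsto_sum_comp_div_of_iid hV hindep hlaw (hg.indicator hp)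
    (hcomp ▸ hint.integrable_indicator₀ hpV)
  have hlim : ∫ ω, {b | p b}.indicator g (V ω) ∂μ = ∫ ω in V ⁻¹' {b | p b}, g (V ω) ∂μ := by
    rw [← integral_indicator₀ hpV]
    rfl
  rw [hlim] at h
  simpa only [Set.indicator_apply, Set.mem_ofPred_eq, ← sum_filter] using h

theorem ae_tendsto_card_filter_div_of_iid (hV : AEMeasurable V μ) (hindep : iIndepFun Vs μ')
    (hlaw : ∀ i, μ'.map (Vs i) = μ.map V) (hp : MeasurableSet {b | p b}) :
    ∀ᵐ ω' ∂μ', Tendsto (fun n : ℕ => (#((range n).filter (fun i => p (Vs i ω'))) : ℝ) / n)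
      atTop (𝓝 (μ (V ⁻¹' {b | p b})).toReal) := by
  have h := ae_tendsto_sum_filter_div_of_iid hV hindep hlaw hp measurable_const
    (integrable_const (1 : ℝ)).integrableOn
  simpa [measureReal_def] using h

theorem ae_tendsto_sampleMean_of_iid (hV : AEMeasurable V μ) (hindep : iIndepFun Vs μ')
    (hlaw : ∀ i, μ'.map (Vs i) = μ.map V) (hp : MeasurableSet {b | p b})
    (hpos : μ (V ⁻¹' {b | p b}) ≠ 0) {g : β → ℝ} (hg : Measurable g)
    (hint : IntegrableOn (g ∘ V) (V ⁻¹' {b | p b}) μ) :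
    ∀ᵐ ω' ∂μ', Tendsto (fun n : ℕ => (∑ i ∈ (range n).filter (fun i => p (Vs i ω')), g (Vs i ω'))
      / #((range n).filter (fun i => p (Vs i ω')))) atTop
      (𝓝 (cexp μ (g ∘ V) (V ⁻¹' {b | p b}))) := by
  filter_upwards [ae_tendsto_sum_filter_div_of_iid hV hindep hlaw hp hg hint,
    ae_tendsto_card_filter_div_of_iid hV hindep hlaw hp] with ω' hsum hcard
  exact hsum.div_of_div_natCast hcard (ENNReal.toReal_ne_zero.mpr ⟨hpos, measure_ne_top _ _⟩)

end StrongLaw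

section DifferenceInDifferences

variable {Ω : Type*} {T : ℕ} {E : Ω → ℕ} {Ye : ℕ → ℕ → Ω → ℝ} {Yinf : ℕ → Ω → ℝ}

theorem obsY_of_eq {e : ℕ} (he : e ∈ Icc 1 T) {ω : Ω} (hω : E ω = e) (t : ℕ) :
    obsY T E Ye Yinf t ω = Ye e t ω := by
  rw [obsY, sum_eq_single_of_mem e he fun e' _ he' => by simp [hω, Ne.symm he']]
  simp [hω]

variable [MeasurableSpace Ω] {μ : Measure Ω}

theorem cexp_congr_ae {Z W : Ω → ℝ} {A : Set Ω} (hA : MeasurableSet A)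
    (h : ∀ᵐ ω ∂μ, ω ∈ A → Z ω = W ω) : cexp μ Z A = cexp μ W A := by
  rw [cexp, cexp, setIntegral_congr_ae hA h]

theorem cexp_add {Z W : Ω → ℝ} {A : Set Ω} (hZ : IntegrableOn Z A μ) (hW : IntegrableOn W A μ) :
    cexp μ (fun ω => Z ω + W ω) A = cexp μ Z A + cexp μ W A := by
  rw [cexp, cexp, cexp, integral_add hZ hW, add_div]

theorem CATT_natCast (e l : ℕ) :
    CATT μ E Ye Yinf e l = cexp μ (fun ω => Ye e (e + l) ω - Yinf (e + l) ω) {ω | E ω = e} := by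
  rw [CATT, show ((e : ℤ) + l).toNat = e + l by omega]

theorem integrable_obsY (hE : Measurable E) {t : ℕ} (hYe : ∀ e ∈ Icc 1 T, Integrable (Ye e t) μ)
    (hYinf : Integrable (Yinf t) μ) : Integrable (obsY T E Ye Yinf t) μ := by
  refine hYinf.add (integrable_finsetSum _ fun e he => ?_)
  convert ((hYe e he).sub hYinf).indicator (hE (measurableSet_singleton e)) using 1
  ext ω
  by_cases hω : E ω = e <;> simp [hω]

theorem cexp_did_obsY_eq_CATT (hE : Measurable E) (hPT : PT μ T E Yinf) (hNA : NA μ T Ye Yinf)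
    {e l : ℕ} (he : 1 ≤ e) (hl : e + l < T) (hYe : Integrable (Ye e (e + l)) μ)
    (hYinf : Integrable (Yinf (e + l)) μ) (hYinf₀ : Integrable (Yinf 0) μ) :
    cexp μ (fun ω => obsY T E Ye Yinf (e + l) ω - obsY T E Ye Yinf 0 ω) {ω | E ω = e}
      - cexp μ (fun ω => obsY T E Ye Yinf (e + l) ω - obsY T E Ye Yinf 0 ω) {ω | E ω = T}
      = CATT μ E Ye Yinf e l := by
  have hcohort : ∀ c, MeasurableSet {ω | E ω = c} := fun c => hE (measurableSet_singleton c)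
  have heT : e ∈ Icc 1 T := mem_Icc.mpr ⟨he, by omega⟩
  have hTT : T ∈ Icc 1 T := mem_Icc.mpr ⟨by omega, le_rfl⟩
  have htreated : cexp μ (fun ω => obsY T E Ye Yinf (e + l) ω - obsY T E Ye Yinf 0 ω)
      {ω | E ω = e} = CATT μ E Ye Yinf e l + ∫ ω, (Yinf (e + l) ω - Yinf 0 ω) ∂μ := by
    rw [cexp_congr_ae (W := fun ω => (Ye e (e + l) ω - Yinf (e + l) ω)
        + (Yinf (e + l) ω - Yinf 0 ω)) (hcohort e),
      cexp_add (Z := fun ω => Ye e (e + l) ω - Yinf (e + l) ω)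
        (W := fun ω => Yinf (e + l) ω - Yinf 0 ω) (hYe.sub hYinf).integrableOn
        (hYinf.sub hYinf₀).integrableOn,
      hPT e heT 0 (by omega) (e + l) hl.le, CATT_natCast]
    filter_upwards [hNA e heT 0 (by omega)] with ω h₀ hω
    rw [obsY_of_eq heT hω, obsY_of_eq heT hω, h₀]
    ring
  have hcontrol : cexp μ (fun ω => obsY T E Ye Yinf (e + l) ω - obsY T E Ye Yinf 0 ω)
      {ω | E ω = T} = ∫ ω, (Yinf (e + l) ω - Yinf 0 ω) ∂μ := by
    rw [cexp_congr_ae (W := fun ω => Yinf (e + l) ω - Yinf 0 ω) (hcohort T),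
      hPT T hTT 0 (by omega) (e + l) hl.le]
    filter_upwards [hNA T hTT (e + l) hl, hNA T hTT 0 (by omega)] with ω ht h₀ hω
    rw [obsY_of_eq hTT hω, obsY_of_eq hTT hω, ht, h₀]
  rw [htreated, hcontrol, add_sub_cancel_right]

theorem aemeasurable_prodMk_obsY (hE : Measurable E)
    (hobs : ∀ t ≤ T, AEMeasurable (obsY T E Ye Yinf t) μ) :
    AEMeasurable (fun ω => ((E ω, fun t : Fin (T + 1) => obsY T E Ye Yinf t ω) :
      ℕ × (Fin (T + 1) → ℝ))) μ :=
  hE.aemeasurable.prodMk (aemeasurable_pi_lambda _ fun t => hobs t (Nat.le_of_lt_succ t.isLt))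

theorem measure_eq_and_le_div_eq_div_sum [IsFiniteMeasure μ] (hE : Measurable E)
    (hE₁ : ∀ᵐ ω ∂μ, 1 ≤ E ω) {m e : ℕ} (he : e ∈ Icc 1 m) :
    (μ {ω | E ω = e ∧ E ω ≤ m}).toReal / (μ {ω | E ω ≤ m}).toReal
      = (μ {ω | E ω = e}).toReal / ∑ e' ∈ Icc 1 m, (μ {ω | E ω = e'}).toReal := by
  have hcohort : {ω | E ω = e ∧ E ω ≤ m} = {ω | E ω = e} := by
    ext ω
    simp only [Set.mem_ofPred_eq, and_iff_left_iff_imp]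
    rintro rfl
    exact (mem_Icc.mp he).2
  have hle : μ {ω | E ω ≤ m} = ∑ e' ∈ Icc 1 m, μ {ω | E ω = e'} := by
    refine (measure_congr ?_).trans
      (sum_measure_preimage_singleton _ fun e' _ => hE (measurableSet_singleton e')).symm
    filter_upwards [hE₁] with ω hω
    show (ω ∈ {ω | E ω ≤ m}) = (ω ∈ E ⁻¹' ↑(Icc 1 m))
    simp [hω]
  rw [hcohort, hle, ENNReal.toReal_sum fun _ _ => measure_ne_top _ _]

end DifferenceInDifferences

namespace IIDSample

variable {Ω Ω' : Type*} [MeasurableSpace Ω] [MeasurableSpace Ω'] {μ : Measure Ω}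
  [IsProbabilityMeasure μ] {μ' : Measure Ω'} {T : ℕ} {E : Ω → ℕ} {Ye : ℕ → ℕ → Ω → ℝ}
  {Yinf : ℕ → Ω → ℝ} {Eseq : ℕ → Ω' → ℕ} {Yseq : ℕ → ℕ → Ω' → ℝ}

theorem ae_tendsto_sampleCount_div (hiid : IIDSample μ μ' T E Ye Yinf Eseq Yseq)
    (hE : Measurable E) (hobs : ∀ t ≤ T, AEMeasurable (obsY T E Ye Yinf t) μ) :
    ∀ᵐ ω' ∂μ', ∀ e, Tendsto (fun n : ℕ => (sampleCount Eseq {e} n ω' : ℝ) / n) atTop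
      (𝓝 (μ {ω | E ω = e}).toReal) := by
  refine ae_all_iff.mpr fun e => ?_
  have hfst : MeasurableSet {v : ℕ × (Fin (T + 1) → ℝ) | v.1 = e} :=
    measurable_fst (measurableSet_singleton e)
  have h :=
    ae_tendsto_card_filter_div_of_iid (aemeasurable_prodMk_obsY hE hobs) hiid.1 hiid.2 hfst
  simpa only [sampleCount, Finset.mem_singleton, Set.preimage_ofPred_eq] using h

theorem ae_tendsto_sampleCohortMean (hiid : IIDSample μ μ' T E Ye Yinf Eseq Yseq)
    (hE : Measurable E) (hobs : ∀ t ≤ T, Integrable (obsY T E Ye Yinf t) μ) :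
    ∀ᵐ ω' ∂μ', ∀ e t s, t ≤ T → s ≤ T → μ {ω | E ω = e} ≠ 0 →
      Tendsto (fun n : ℕ => (∑ i ∈ (range n).filter (fun i => Eseq i ω' = e),
          (Yseq i t ω' - Yseq i s ω')) / (sampleCount Eseq {e} n ω' : ℝ)) atTop
        (𝓝 (cexp μ (fun ω => obsY T E Ye Yinf t ω - obsY T E Ye Yinf s ω) {ω | E ω = e})) := by
  refine ae_all_iff.mpr fun e => ae_all_iff.mpr fun t => ae_all_iff.mpr fun s => ?_
  by_cases hts : t ≤ T ∧ s ≤ T ∧ μ {ω | E ω = e} ≠ 0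
  · obtain ⟨ht, hs, hpos⟩ := hts
    have hfst : MeasurableSet {v : ℕ × (Fin (T + 1) → ℝ) | v.1 = e} :=
      measurable_fst (measurableSet_singleton e)
    have hg : Measurable fun v : ℕ × (Fin (T + 1) → ℝ) =>
        v.2 ⟨t, Nat.lt_succ_of_le ht⟩ - v.2 ⟨s, Nat.lt_succ_of_le hs⟩ := by
      fun_prop
    have h := ae_tendsto_sampleMean_of_iid
      (aemeasurable_prodMk_obsY hE fun t ht => (hobs t ht).aemeasurable) hiid.1 hiid.2 hfst hpos
      hg ((hobs t ht).sub (hobs s hs)).integrableOn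
    filter_upwards [h] with ω' hω' _ _ _
    simpa only [sampleCount, Finset.mem_singleton, Set.preimage_ofPred_eq, Function.comp_def]
      using hω'
  · exact .of_forall fun ω' ht hs hpos => absurd ⟨ht, hs, hpos⟩ hts

theorem ae_tendsto_sampleDID (hiid : IIDSample μ μ' T E Ye Yinf Eseq Yseq) (hE : Measurable E)
    (hobs : ∀ t ≤ T, Integrable (obsY T E Ye Yinf t) μ) :
    ∀ᵐ ω' ∂μ', ∀ e c l s : ℕ, e + l ≤ T → s ≤ T → μ {ω | E ω = e} ≠ 0 → μ {ω | E ω = c} ≠ 0 →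
      Tendsto (fun n => sampleDID Eseq Yseq e l s {c} n ω') atTop
        (𝓝 (cexp μ (fun ω => obsY T E Ye Yinf (e + l) ω - obsY T E Ye Yinf s ω) {ω | E ω = e}
          - cexp μ (fun ω => obsY T E Ye Yinf (e + l) ω - obsY T E Ye Yinf s ω)
            {ω | E ω = c})) := by
  filter_upwards [hiid.ae_tendsto_sampleCohortMean hE hobs] with ω' h e c l s ht hs he hc
  have hsub := (h e (e + l) s ht hs he).sub (h c (e + l) s ht hs hc)
  simpa only [sampleDID, show ((e : ℤ) + l).toNat = e + l by omega, Finset.mem_singleton]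
    using hsub

end IIDSample

theorem iw_static_estimator_consistent_general
    {Ω Ω' : Type*} [MeasurableSpace Ω] [MeasurableSpace Ω']
    (μ : Measure Ω) [IsProbabilityMeasure μ]
    (μ' : Measure Ω')
    (T : ℕ)
    (E : Ω → ℕ) (hE : Measurable E)
    (hsupp : μ {ω | 1 ≤ E ω ∧ E ω ≤ T} = 1)
    (hpos : ∀ e ∈ Finset.Icc 1 T, 0 < μ {ω | E ω = e})
    (Ye : ℕ → ℕ → Ω → ℝ) (Yinf : ℕ → Ω → ℝ)
    (hL2e : ∀ e ∈ Finset.Icc 1 T, ∀ t ≤ T, MemLp (Ye e t) 2 μ)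
    (hL2inf : ∀ t ≤ T, MemLp (Yinf t) 2 μ)
    (hPT : PT μ T E Yinf) (hNA : NA μ T Ye Yinf)
    (Eseq : ℕ → Ω' → ℕ) (Yseq : ℕ → ℕ → Ω' → ℝ)
    (hiid : IIDSample μ μ' T E Ye Yinf Eseq Yseq) :
    ∀ᵐ ω' ∂μ', Tendsto
      (fun n => ∑ e ∈ Finset.Icc 1 (T - 1),
        ((sampleCount Eseq {e} n ω' : ℝ)
            / ∑ e' ∈ Finset.Icc 1 (T - 1), (sampleCount Eseq {e'} n ω' : ℝ))
          * ((1 / ((T : ℝ) - (e : ℝ)))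
            * ∑ l ∈ Finset.range (T - e), sampleDID Eseq Yseq e (l : ℤ) 0 {T} n ω'))
      atTop
      (nhds (∑ e ∈ Finset.Icc 1 (T - 1),
        ((μ {ω | E ω = e ∧ E ω ≤ T - 1}).toReal / (μ {ω | E ω ≤ T - 1}).toReal)
          * ((1 / ((T : ℝ) - (e : ℝ)))
            * ∑ l ∈ Finset.range (T - e), CATT μ E Ye Yinf e (l : ℤ)))) := by
  have hYe e (he : e ∈ Icc 1 T) t (ht : t ≤ T) := (hL2e e he t ht).integrable one_le_two
  have hYinf t (ht : t ≤ T) := (hL2inf t ht).integrable one_le_two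
  have hobs t (ht : t ≤ T) := integrable_obsY hE (fun e he => hYe e he t ht) (hYinf t ht)
  have hE₁ : ∀ᵐ ω ∂μ, 1 ≤ E ω := by
    have hsupp_ae := (ae_iff_measure_eq (hE measurableSet_Icc).nullMeasurableSet).mpr
      (hsupp.trans measure_univ.symm)
    exact hsupp_ae.mono fun ω hω => hω.1
  filter_upwards [hiid.ae_tendsto_sampleCount_div hE fun t ht => (hobs t ht).aemeasurable,
    hiid.ae_tendsto_sampleDID hE hobs] with ω' hcount hDID
  refine tendsto_finsetSum _ fun e he => ?_
  have heT : e ∈ Icc 1 T := Icc_subset_Icc_right (Nat.sub_le T 1) he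
  have hTT : T ∈ Icc 1 T := mem_Icc.mpr ⟨(mem_Icc.mp heT).1.trans (mem_Icc.mp heT).2, le_rfl⟩
  have hshare_pos : 0 < ∑ e' ∈ Icc 1 (T - 1), (μ {ω | E ω = e'}).toReal :=
    sum_pos' (fun _ _ => ENNReal.toReal_nonneg)
      ⟨e, he, ENNReal.toReal_pos (hpos e heT).ne' (measure_ne_top _ _)⟩
  rw [measure_eq_and_le_div_eq_div_sum hE hE₁ he]
  refine ((hcount e).div_of_div_natCast ?_ hshare_pos.ne').mul
    ((tendsto_finsetSum _ fun l hlr => ?_).const_mul _)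
  · simpa only [sum_div] using tendsto_finsetSum _ fun e' _ => hcount e'
  · have hl : e + l < T := by rw [mem_range] at hlr; omega
    rw [← cexp_did_obsY_eq_CATT hE hPT hNA (mem_Icc.mp heT).1 hl (hYe e heT _ hl.le)
      (hYinf _ hl.le) (hYinf 0 (Nat.zero_le T))]
    exact hDID e T l 0 hl.le (Nat.zero_le T) (hpos e heT).ne' (hpos T hTT).ne'

/-- Proposition 5: the static interaction-weighted estimator `κ̂(n)` converges almost surely
to `Σ_{e=1}^{T−1} P(E = e | E ≤ T−1)·(1/(T−e))·Σ_{l=0}^{T−1−e} CATT(e,l)`. -/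
theorem iw_static_estimator_consistent
    {Ω Ω' : Type*} [MeasurableSpace Ω] [MeasurableSpace Ω']
    (μ : Measure Ω) [IsProbabilityMeasure μ]
    (μ' : Measure Ω') [IsProbabilityMeasure μ']
    (T : ℕ) (hT : 2 ≤ T)
    (E : Ω → ℕ) (hE : Measurable E)
    (hsupp : μ {ω | 1 ≤ E ω ∧ E ω ≤ T} = 1)
    (hpos : ∀ e ∈ Finset.Icc 1 T, 0 < μ {ω | E ω = e})
    (Ye : ℕ → ℕ → Ω → ℝ) (Yinf : ℕ → Ω → ℝ)
    (hL2e : ∀ e ∈ Finset.Icc 1 T, ∀ t ≤ T, MemLp (Ye e t) 2 μ)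
    (hL2inf : ∀ t ≤ T, MemLp (Yinf t) 2 μ)
    (hPT : PT μ T E Yinf) (hNA : NA μ T Ye Yinf)
    (Eseq : ℕ → Ω' → ℕ) (Yseq : ℕ → ℕ → Ω' → ℝ)
    (hiid : IIDSample μ μ' T E Ye Yinf Eseq Yseq) :
    ∀ᵐ ω' ∂μ', Tendsto
      (fun n => ∑ e ∈ Finset.Icc 1 (T - 1),
        ((sampleCount Eseq {e} n ω' : ℝ)
            / ∑ e' ∈ Finset.Icc 1 (T - 1), (sampleCount Eseq {e'} n ω' : ℝ))
          * ((1 / ((T : ℝ) - (e : ℝ)))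
            * ∑ l ∈ Finset.range (T - e), sampleDID Eseq Yseq e (l : ℤ) 0 {T} n ω'))
      atTop
      (nhds (∑ e ∈ Finset.Icc 1 (T - 1),
        ((μ {ω | E ω = e ∧ E ω ≤ T - 1}).toReal / (μ {ω | E ω ≤ T - 1}).toReal)
          * ((1 / ((T : ℝ) - (e : ℝ)))
            * ∑ l ∈ Finset.range (T - e), CATT μ E Ye Yinf e (l : ℤ)))) :=
  iw_static_estimator_consistent_general μ μ' T E hE hsupp hpos Ye Yinf hL2e hL2inf hPT hNA Eseq
    Yseq hiid
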